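/- arXiv:2004.03578 — 3 statements merged into one kernel-verified Lean document; each statement's English description precedes it below -/
import Mathlib

section
/- Let ℓ^∞(ℤ,ℝ) be the Banach space of bounded real sequences indexed by ℤ with the supremum norm, let S : ℓ^∞ → ℓ^∞ be the shift (SU)_n = U_{n+1}, let Ū ∈ ℓ^∞ be given by Ū_n = 0 for n ≤ 0 and Ū_n = 1 for n > 0, and for μ ∈ [0,1] let V̄(μ) ∈ ℓ^∞ be given by V̄(μ)_n = 0 for n < 0, V̄(μ)_0 = μ, and V̄(μ)_n = 1 for n > 0. Then the set Γ₀ := { (S^p Ū, μ) : p ∈ ℤ, μ ∈ [0,1] } ∪ { (S^p V̄(μ), μ) : p ∈ ℤ, μ ∈ [0,1] } is a connected subset of ℓ^∞(ℤ,ℝ) × ℝ. -/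
open BoundedContinuousFunction

/-- The singular back solution `Ū`: `Ū_n = 0` for `n ≤ 0` and `Ū_n = 1` for `n > 0`. -/
noncomputable def UbarFun : ℤ → ℝ := fun n => if n ≤ 0 then 0 else 1

/-- The singular back solution `V̄(μ)`: `V̄(μ)_n = 0` for `n < 0`, `V̄(μ)_0 = μ`,
`V̄(μ)_n = 1` for `n > 0`. -/
noncomputable def VbarFun (μ : ℝ) : ℤ → ℝ := fun n =>
  if n < 0 then 0 else if n = 0 then μ else 1

/-!
Each `S^q V̄(μ)` is the affine path `S^q Ū + μ e_{-q}`, so `μ ↦ (S^q V̄(μ), μ)` is an arc in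
`Γ₀` from `(S^q Ū, 0)` to `(S^q Ū + e_{-q}, 1) = (S^{q+1} Ū, 1)`, and the vertical segment
`{S^{q+1} Ū} × [0,1]` joins its end to the start of the next arc. Thus `Γ₀` is a chain of
connected sets, indexed by `q ∈ ℤ`, in which consecutive links meet.
-/

lemma VbarFun_eq_UbarFun_add (μ : ℝ) (n : ℤ) :
    VbarFun μ n = UbarFun n + if n = 0 then μ else 0 := by
  unfold VbarFun UbarFun
  split_ifs <;> first | omega | simp

lemma UbarFun_add_one (n : ℤ) : UbarFun (n + 1) = UbarFun n + if n = 0 then 1 else 0 := by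
  unfold UbarFun
  split_ifs <;> first | omega | simp

noncomputable def shiftedUbar (q : ℤ) : ℤ →ᵇ ℝ :=
  ofNormedAddCommGroupDiscrete (fun n => UbarFun (n + q)) 1 fun n => by
    unfold UbarFun; split_ifs <;> simp

noncomputable def unitSeq (m : ℤ) : ℤ →ᵇ ℝ :=
  ofNormedAddCommGroupDiscrete (fun n => if n = m then 1 else 0) 1 fun n => by
    split_ifs <;> simp

noncomputable def shiftedVbar (q : ℤ) (μ : ℝ) : ℤ →ᵇ ℝ := shiftedUbar q + μ • unitSeq (-q)

lemma shiftedUbar_apply (q n : ℤ) : shiftedUbar q n = UbarFun (n + q) := rfl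

lemma shiftedVbar_apply (q : ℤ) (μ : ℝ) (n : ℤ) : shiftedVbar q μ n = VbarFun μ (n + q) := by
  simp [shiftedVbar, shiftedUbar_apply, unitSeq, VbarFun_eq_UbarFun_add, eq_neg_iff_add_eq_zero]

lemma shiftedVbar_zero (q : ℤ) : shiftedVbar q 0 = shiftedUbar q := by
  simp [shiftedVbar]

lemma shiftedVbar_one (q : ℤ) : shiftedVbar q 1 = shiftedUbar (q + 1) := by
  ext n
  simp [shiftedVbar_apply, shiftedUbar_apply, VbarFun_eq_UbarFun_add, ← add_assoc, UbarFun_add_one]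

lemma continuous_shiftedVbar (q : ℤ) : Continuous (shiftedVbar q) := by
  unfold shiftedVbar
  fun_prop

/-- The paper's `Γ₀`. -/
def gammaZero : Set ((ℤ →ᵇ ℝ) × ℝ) :=
  { p | p.2 ∈ Set.Icc (0 : ℝ) 1 ∧
      ∃ q : ℤ, (∀ n : ℤ, p.1 n = UbarFun (n + q)) ∨ (∀ n : ℤ, p.1 n = VbarFun p.2 (n + q)) }

def gammaZeroLink (q : ℤ) : Set ((ℤ →ᵇ ℝ) × ℝ) :=
  (fun μ => (shiftedUbar q, μ)) '' Set.Icc 0 1 ∪ (fun μ => (shiftedVbar q μ, μ)) '' Set.Icc 0 1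

lemma gammaZero_eq_iUnion : gammaZero = ⋃ q, gammaZeroLink q := by
  ext ⟨f, μ⟩
  simp only [gammaZero, gammaZeroLink, Set.mem_ofPred_eq, Set.mem_iUnion, Set.mem_union,
    Set.mem_image, Prod.mk.injEq, exists_eq_right_right, DFunLike.ext_iff, shiftedUbar_apply,
    shiftedVbar_apply, eq_comm (b := f _)]
  constructor
  · rintro ⟨hμ, q, h⟩
    exact ⟨q, h.imp (⟨hμ, ·⟩) (⟨hμ, ·⟩)⟩
  · rintro ⟨q, ⟨hμ, h⟩ | ⟨hμ, h⟩⟩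
    exacts [⟨hμ, q, .inl h⟩, ⟨hμ, q, .inr h⟩]

lemma isConnected_gammaZeroLink (q : ℤ) : IsConnected (gammaZeroLink q) := by
  have hIcc := isConnected_Icc (zero_le_one' ℝ)
  refine (hIcc.image _ (by fun_prop)).union ?_ (hIcc.image _ ?_)
  · exact ⟨(shiftedUbar q, 0), ⟨0, by simp, rfl⟩, ⟨0, by simp, by simp [shiftedVbar_zero]⟩⟩
  · exact ((continuous_shiftedVbar q).prodMk continuous_id).continuousOn

lemma gammaZeroLink_inter_succ_nonempty (q : ℤ) :
    (gammaZeroLink q ∩ gammaZeroLink (q + 1)).Nonempty :=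
  ⟨(shiftedUbar (q + 1), 1), .inr ⟨1, by simp, by simp [shiftedVbar_one]⟩, .inl ⟨1, by simp, rfl⟩⟩

/-- In `ℓ^∞(ℤ,ℝ) × ℝ` (bounded sequences with sup norm, times ℝ),
the set `Γ₀` of all pairs `(S^q Ū, μ)` and `(S^q V̄(μ), μ)` with `q ∈ ℤ` and
`μ ∈ [0,1]` is connected.  Here the shift acts by `(S^q W)_n = W_{n+q}`. -/
theorem statement8 :
    IsConnected { p : (ℤ →ᵇ ℝ) × ℝ |
      p.2 ∈ Set.Icc (0 : ℝ) 1 ∧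
      ∃ q : ℤ, (∀ n : ℤ, p.1 n = UbarFun (n + q)) ∨
               (∀ n : ℤ, p.1 n = VbarFun p.2 (n + q)) } := by
  change IsConnected gammaZero
  rw [gammaZero_eq_iUnion]
  exact IsConnected.iUnion_of_chain isConnected_gammaZeroLink gammaZeroLink_inter_succ_nonempty
end

section
/- For every compact interval [a,b] ⊂ (0,1) there exist d⋆ > 0 and C > 0 such that for every d ∈ (0, d⋆) and every μ ∈ [a,b] there exists a bounded sequence U : ℤ → ℝ satisfying the discrete Nagumo steady-state equation 0 = d(U_{n+1} + U_{n−1} − 2U_n) + U_n(U_n − μ)(1 − U_n) for all n ∈ ℤ, such that sup_{n∈ℤ} |U_n − Ū_n| ≤ C·d, U_n → 0 as n → −∞, and U_n → 1 as n → +∞; moreover U can be chosen as U = Φ(d, μ) for a continuous map Φ : (0,d⋆) × [a,b] → ℓ^∞(ℤ,ℝ) with sup_{μ∈[a,b]} ‖Φ(d,μ) − Ū‖_∞ → 0 as d → 0⁺. -/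
/-!
Write `U = Ū + V`. Each value `Ū_n ∈ {0, 1}` is a zero of `f(u) = u (u - μ) (1 - u)` with
`f'(Ū_n) ≠ 0`, so the steady-state equation becomes a fixed-point problem `V = T_{d,μ} V` in
`ℓ^∞(ℤ)`: divide the linear part `f'(Ū_n) V_n` out. For `m ≤ μ ≤ 1 - m` and `0 ≤ d ≤ m² / 128`,
`T_{d,μ}` is a `1/2`-contraction of the ball of radius `m / 16` intersected with the closed ideal
of sequences vanishing at `±∞`. Its fixed point lies within `2 ‖T_{d,μ} 0‖ ≤ 8 d / m` of `0`, and it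
depends continuously on `(d, μ)` because `T_{d,μ} V` does.
-/

open BoundedContinuousFunction Filter

open Set Metric Topology
open scoped NNReal

section NormedRing

variable {R : Type*} [SeminormedCommRing R] {x y : R} {r : ℝ}

lemma norm_sq_sub_sq_le (hx : ‖x‖ ≤ r) (hy : ‖y‖ ≤ r) : ‖x ^ 2 - y ^ 2‖ ≤ 2 * r * ‖x - y‖ := by
  calc ‖x ^ 2 - y ^ 2‖ = ‖(x + y) * (x - y)‖ := by rw [sq_sub_sq]
    _ ≤ (‖x‖ + ‖y‖) * ‖x - y‖ := by grw [norm_mul_le, norm_add_le]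
    _ ≤ 2 * r * ‖x - y‖ := by grw [hx, hy, two_mul]

lemma norm_pow_three_sub_pow_three_le (hx : ‖x‖ ≤ r) (hy : ‖y‖ ≤ r) :
    ‖x ^ 3 - y ^ 3‖ ≤ 3 * r ^ 2 * ‖x - y‖ := by
  have hxy : ‖x ^ 2 + x * y + y ^ 2‖ ≤ 3 * r ^ 2 :=
    calc ‖x ^ 2 + x * y + y ^ 2‖ ≤ ‖x‖ * ‖x‖ + ‖x‖ * ‖y‖ + ‖y‖ * ‖y‖ := by
          grw [norm_add₃_le, sq, sq, norm_mul_le x x, norm_mul_le x y, norm_mul_le y y]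
      _ ≤ 3 * r ^ 2 := by nlinarith [norm_nonneg x, norm_nonneg y]
  calc ‖x ^ 3 - y ^ 3‖ = ‖(x - y) * (x ^ 2 + x * y + y ^ 2)‖ := by congr 1; ring
    _ ≤ ‖x - y‖ * (3 * r ^ 2) := by grw [norm_mul_le, hxy]
    _ = 3 * r ^ 2 * ‖x - y‖ := mul_comm _ _

end NormedRing

theorem ContractingWith.continuous_fixedPoint {P α : Type*} [TopologicalSpace P] [MetricSpace α]
    [Nonempty α] [CompleteSpace α] {K : ℝ≥0} {f : P → α → α} (hf : ∀ p, ContractingWith K (f p))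
    (hcont : ∀ x, Continuous fun p => f p x) :
    Continuous fun p => (hf p).fixedPoint (f p) := by
  refine continuous_iff_continuousAt.2 fun p₀ => ?_
  set x₀ := (hf p₀).fixedPoint (f p₀)
  have hdist : ∀ p, dist ((hf p).fixedPoint (f p)) x₀ ≤ dist x₀ (f p x₀) / (1 - K) := fun p => by
    rw [dist_comm]; exact (hf p).dist_fixedPoint_le x₀
  have hlim : Tendsto (fun p => dist x₀ (f p x₀) / (1 - K)) (𝓝 p₀) (𝓝 0) := by
    have hx₀ : f p₀ x₀ = x₀ := (hf p₀).fixedPoint_isFixedPt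
    simpa [hx₀] using
      ((tendsto_const_nhds (x := x₀)).dist ((hcont x₀).tendsto p₀)).div_const ((1 : ℝ) - K)
  exact tendsto_iff_dist_tendsto_zero.2 (squeeze_zero (fun _ => dist_nonneg) hdist hlim)

namespace DiscreteNagumo

noncomputable def ubar : ℤ →ᵇ ℝ :=
  ofNormedAddCommGroup UbarFun continuous_of_discreteTopology 1 fun n => by
    unfold UbarFun; split_ifs <;> simp

lemma ubar_apply_of_nonpos {n : ℤ} (hn : n ≤ 0) : ubar n = 0 := if_pos hn

lemma ubar_apply_of_pos {n : ℤ} (hn : 0 < n) : ubar n = 1 := if_neg hn.not_ge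

lemma norm_ubar_le : ‖ubar‖ ≤ 1 := norm_ofNormedAddCommGroup_le _ zero_le_one _

lemma abs_ubar_add_apply_sub_le (V : ℤ →ᵇ ℝ) (n : ℤ) : |(ubar + V) n - UbarFun n| ≤ ‖V‖ := by
  rw [coe_add, Pi.add_apply, show ubar n = UbarFun n from rfl, add_sub_cancel_left,
    ← Real.norm_eq_abs]
  exact V.norm_coe_le_norm n

noncomputable def step (x y : ℝ) : ℤ →ᵇ ℝ := x • (1 - ubar) + y • ubar

variable {x y : ℝ} {n : ℤ}

lemma step_apply_of_nonpos (hn : n ≤ 0) : step x y n = x := by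
  simp [step, ubar_apply_of_nonpos hn]

lemma step_apply_of_pos (hn : 0 < n) : step x y n = y := by
  simp [step, ubar_apply_of_pos hn]

lemma norm_step_le {C : ℝ} (hx : |x| ≤ C) (hy : |y| ≤ C) : ‖step x y‖ ≤ C := by
  refine (norm_le ((abs_nonneg x).trans hx)).2 fun n => ?_
  rcases le_or_gt n 0 with hn | hn
  · rwa [step_apply_of_nonpos hn]
  · rwa [step_apply_of_pos hn]

@[fun_prop]
lemma continuous_step {X : Type*} [TopologicalSpace X] {f g : X → ℝ} (hf : Continuous f)
    (hg : Continuous g) : Continuous fun p => step (f p) (g p) := by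
  unfold step; fun_prop

noncomputable def lap : (ℤ →ᵇ ℝ) →L[ℝ] (ℤ →ᵇ ℝ) :=
  compContinuousCLM ℝ ℝ ⟨(· + 1), continuous_of_discreteTopology⟩ +
    compContinuousCLM ℝ ℝ ⟨(· - 1), continuous_of_discreteTopology⟩ -
    2 • ContinuousLinearMap.id ℝ _

@[simp] lemma lap_apply (V : ℤ →ᵇ ℝ) (n : ℤ) : lap V n = V (n + 1) + V (n - 1) - 2 * V n := by
  simp [lap]

lemma norm_lap_apply_le (V : ℤ →ᵇ ℝ) : ‖lap V‖ ≤ 4 * ‖V‖ := by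
  refine (norm_le (by positivity)).2 fun n => ?_
  have h (k : ℤ) := abs_le.1 (V.norm_coe_le_norm k)
  have := h (n + 1); have := h (n - 1); have := h n
  rw [lap_apply, Real.norm_eq_abs, abs_le]
  constructor <;> linarith

def decaying : Ideal (ℤ →ᵇ ℝ) where
  carrier := {V | Tendsto V cofinite (𝓝 0)}
  zero_mem' := tendsto_const_nhds
  add_mem' {V W} hV hW := by
    show Tendsto (fun n => V n + W n) _ _
    simpa only [add_zero] using hV.add hW
  smul_mem' c V hV := squeeze_zero_norm (fun n => (norm_mul_le (c n) (V n)).trans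
    (mul_le_mul_of_nonneg_right (c.norm_coe_le_norm n) (norm_nonneg _)))
    (by simpa using hV.norm.const_mul ‖c‖)

lemma mem_decaying {V : ℤ →ᵇ ℝ} : V ∈ decaying ↔ Tendsto V cofinite (𝓝 0) := Iff.rfl

lemma isClosed_decaying : IsClosed (decaying : Set (ℤ →ᵇ ℝ)) := by
  convert ZeroAtInftyContinuousMap.isClosed_range_toBCF (α := ℤ) (β := ℝ)
  ext V
  simp only [SetLike.mem_coe, mem_decaying, ← cocompact_eq_cofinite, mem_range]
  exact ⟨fun hV => ⟨⟨V.toContinuousMap, hV⟩, rfl⟩, by rintro ⟨g, rfl⟩; exact g.zero_at_infty'⟩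

lemma lap_mem_decaying {V : ℤ →ᵇ ℝ} (hV : V ∈ decaying) : lap V ∈ decaying := by
  have hshift (k : ℤ) : Tendsto (fun n => V (n + k)) cofinite (𝓝 0) :=
    hV.comp (add_left_injective k).tendsto_cofinite
  rw [mem_decaying, show ⇑(lap V) = _ from funext (lap_apply V)]
  simpa only [add_zero, mul_zero, sub_zero, ← sub_eq_add_neg] using
    ((hshift 1).add (hshift (-1))).sub (hV.const_mul 2)

lemma lap_ubar_mem_decaying : lap ubar ∈ decaying := by
  refine tendsto_const_nhds.congr'
    (eventually_cofinite.2 ((finite_Icc (0 : ℤ) 1).subset fun n hn => ?_))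
  by_contra hn'
  rcases not_and_or.1 hn' with h | h <;> apply hn <;> rw [not_le] at h
  · simp [ubar_apply_of_nonpos, h.le, show n + 1 ≤ 0 by omega, show n - 1 ≤ 0 by omega]
  · norm_num [ubar_apply_of_pos, h, show 0 < n by omega, show 0 < n + 1 by omega]

lemma tendsto_ubar_add_atBot {V : ℤ →ᵇ ℝ} (hV : V ∈ decaying) :
    Tendsto (ubar + V) atBot (𝓝 0) := by
  refine (tendsto_sup.1 (Int.cofinite_eq ▸ mem_decaying.1 hV)).1.congr' ?_
  filter_upwards [eventually_le_atBot 0] with n hn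
  simp [ubar_apply_of_nonpos hn]

lemma tendsto_ubar_add_atTop {V : ℤ →ᵇ ℝ} (hV : V ∈ decaying) :
    Tendsto (ubar + V) atTop (𝓝 1) := by
  have := ((tendsto_sup.1 (Int.cofinite_eq ▸ mem_decaying.1 hV)).2).const_add 1
  rw [add_zero] at this
  refine this.congr' ?_
  filter_upwards [eventually_gt_atTop 0] with n hn
  simp [ubar_apply_of_pos hn]

/- For `u ∈ {0, 1}`: `f(u + v) = -e v + κ v² - v³`, where `f(u) = u (u - μ) (1 - u)`, `e = μ` at
`u = 0`, `e = 1 - μ` at `u = 1`, and `κ = 1 + μ - 3u`. So `U = ubar + V` solves the equation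
iff `e V = d ΔU + κ V² - V³`. -/
noncomputable def nagumoMap (d μ : ℝ) (V : ℤ →ᵇ ℝ) : ℤ →ᵇ ℝ :=
  step μ⁻¹ (1 - μ)⁻¹ * (d • lap (ubar + V) + step (1 + μ) (μ - 2) * V ^ 2 - V ^ 3)

lemma nagumo_eq_of_nagumoMap_eq {d μ : ℝ} (hμ₀ : μ ≠ 0) (hμ₁ : μ ≠ 1) {V : ℤ →ᵇ ℝ}
    (hV : nagumoMap d μ V = V) (n : ℤ) :
    0 = d * ((ubar + V) (n + 1) + (ubar + V) (n - 1) - 2 * (ubar + V) n)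
      + (ubar + V) n * ((ubar + V) n - μ) * (1 - (ubar + V) n) := by
  have h := DFunLike.congr_fun hV n
  have hμ₁' : 1 - μ ≠ 0 := sub_ne_zero.2 hμ₁.symm
  simp only [nagumoMap, coe_mul, coe_sub, coe_add, coe_smul, coe_pow, Pi.mul_apply, Pi.sub_apply,
    Pi.add_apply, Pi.pow_apply, lap_apply, smul_eq_mul] at h ⊢
  rcases le_or_gt n 0 with hn | hn
  · rw [step_apply_of_nonpos hn, step_apply_of_nonpos hn] at h
    rw [ubar_apply_of_nonpos hn] at h ⊢
    field_simp at h
    linear_combination -h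
  · rw [step_apply_of_pos hn, step_apply_of_pos hn] at h
    rw [ubar_apply_of_pos hn] at h ⊢
    field_simp at h
    linear_combination -h

section Contraction

variable {m d μ : ℝ} {V W : ℤ →ᵇ ℝ}

def admissible (m : ℝ) : Set (ℝ × ℝ) := Icc 0 (m ^ 2 / 128) ×ˢ Icc m (1 - m)

lemma norm_step_inv_le (hm : 0 < m) (hμ : μ ∈ Icc m (1 - m)) : ‖step μ⁻¹ (1 - μ)⁻¹‖ ≤ m⁻¹ := by
  obtain ⟨hμ₀, hμ₁⟩ := hμ
  have hμ' : m ≤ 1 - μ := by linarith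
  refine norm_step_le ?_ ?_
  · rw [abs_of_pos (inv_pos.2 (hm.trans_le hμ₀))]; exact inv_anti₀ hm hμ₀
  · rw [abs_of_pos (inv_pos.2 (hm.trans_le hμ'))]; exact inv_anti₀ hm hμ'

lemma norm_step_quadratic_le (hμ : μ ∈ Icc 0 1) : ‖step (1 + μ) (μ - 2)‖ ≤ 2 := by
  obtain ⟨hμ₀, hμ₁⟩ := hμ
  refine norm_step_le ?_ ?_ <;> rw [abs_le] <;> constructor <;> linarith

lemma norm_nagumoMap_sub_le (hm : 0 < m) (hμ : μ ∈ Icc m (1 - m)) (hd : 0 ≤ d) {r : ℝ}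
    (hV : ‖V‖ ≤ r) (hW : ‖W‖ ≤ r) :
    ‖nagumoMap d μ V - nagumoMap d μ W‖ ≤ m⁻¹ * (4 * d + 4 * r + 3 * r ^ 2) * ‖V - W‖ := by
  have hsub : nagumoMap d μ V - nagumoMap d μ W = step μ⁻¹ (1 - μ)⁻¹ *
      (d • lap (V - W) + step (1 + μ) (μ - 2) * (V ^ 2 - W ^ 2) - (V ^ 3 - W ^ 3)) := by
    simp only [nagumoMap, map_sub, map_add, smul_sub, smul_add]
    ring
  have hK := norm_step_quadratic_le (Icc_subset_Icc hm.le (by linarith) hμ)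
  calc _ ≤ m⁻¹ * (‖d • lap (V - W)‖ + ‖step (1 + μ) (μ - 2)‖ * ‖V ^ 2 - W ^ 2‖
        + ‖V ^ 3 - W ^ 3‖) := by
        rw [hsub]
        grw [norm_mul_le, norm_step_inv_le hm hμ, norm_sub_le, norm_add_le, norm_mul_le]
    _ ≤ m⁻¹ * (d * (4 * ‖V - W‖) + 2 * (2 * r * ‖V - W‖) + 3 * r ^ 2 * ‖V - W‖) := by
        grw [norm_smul, Real.norm_of_nonneg hd, norm_lap_apply_le, hK, norm_sq_sub_sq_le hV hW,
          norm_pow_three_sub_pow_three_le hV hW]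
    _ = _ := by ring

def smallDecaying (m : ℝ) : Set (ℤ →ᵇ ℝ) := closedBall 0 (m / 16) ∩ decaying

lemma dist_nagumoMap_le (hm : 0 < m) (hd : d ∈ Icc 0 (m ^ 2 / 128)) (hμ : μ ∈ Icc m (1 - m))
    (hV : ‖V‖ ≤ m / 16) (hW : ‖W‖ ≤ m / 16) :
    dist (nagumoMap d μ V) (nagumoMap d μ W) ≤ 2⁻¹ * dist V W := by
  have hm₁ : m ≤ 1 / 2 := by linarith [hμ.1, hμ.2]
  rw [dist_eq_norm, dist_eq_norm]
  refine (norm_nagumoMap_sub_le hm hμ hd.1 hV hW).trans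
    (mul_le_mul_of_nonneg_right ?_ (norm_nonneg _))
  rw [inv_mul_le_iff₀ hm]
  nlinarith [hd.2]

lemma norm_nagumoMap_zero_le (hm : 0 < m) (hμ : μ ∈ Icc m (1 - m)) (hd : 0 ≤ d) :
    ‖nagumoMap d μ 0‖ ≤ m⁻¹ * (4 * d) := by
  simp only [nagumoMap, add_zero, ne_eq, OfNat.ofNat_ne_zero, not_false_eq_true, zero_pow,
    mul_zero, sub_zero]
  grw [norm_mul_le, norm_step_inv_le hm hμ, norm_smul, Real.norm_of_nonneg hd, norm_lap_apply_le,
    norm_ubar_le, mul_one, mul_comm d]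

lemma zero_mem_smallDecaying (hm : 0 ≤ m) : 0 ∈ smallDecaying m :=
  ⟨mem_closedBall_self (by positivity), decaying.zero_mem⟩

lemma mapsTo_nagumoMap (hm : 0 < m) (hd : d ∈ Icc 0 (m ^ 2 / 128)) (hμ : μ ∈ Icc m (1 - m)) :
    MapsTo (nagumoMap d μ) (smallDecaying m) (smallDecaying m) := by
  rintro V ⟨hVr, hV⟩
  rw [mem_closedBall_zero_iff] at hVr
  refine ⟨mem_closedBall_zero_iff.2 ?_, ?_⟩
  · have h₀ : m⁻¹ * (4 * d) ≤ m / 32 := by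
      rw [inv_mul_le_iff₀ hm]; nlinarith [hd.2]
    have h₁ := dist_nagumoMap_le hm hd hμ hVr (by rw [norm_zero]; positivity)
    rw [dist_eq_norm, dist_zero_right] at h₁
    linarith [norm_le_norm_add_norm_sub' (nagumoMap d μ V) (nagumoMap d μ 0),
      norm_nagumoMap_zero_le hm hμ hd.1]
  · have hsplit : nagumoMap d μ V = step μ⁻¹ (1 - μ)⁻¹ *
        (d • (lap ubar + lap V) + step (1 + μ) (μ - 2) * V ^ 2 - V ^ 3) := by
      rw [nagumoMap, map_add]
    rw [hsplit]
    exact decaying.mul_mem_left _ (sub_mem (add_mem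
      (Submodule.smul_of_tower_mem _ d (add_mem lap_ubar_mem_decaying (lap_mem_decaying hV)))
      (decaying.mul_mem_left _ (decaying.pow_mem_of_mem hV 2 two_pos)))
      (decaying.pow_mem_of_mem hV 3 three_pos))

instance (m : ℝ) : CompleteSpace (smallDecaying m) :=
  (isClosed_closedBall.inter isClosed_decaying).completeSpace_coe

noncomputable def nagumoMapRestrict (hm : 0 < m) (p : admissible m) :
    smallDecaying m → smallDecaying m :=
  (mapsTo_nagumoMap hm p.2.1 p.2.2).restrict _ _ _

lemma contractingWith_nagumoMapRestrict (hm : 0 < m) (p : admissible m) :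
    ContractingWith 2⁻¹ (nagumoMapRestrict hm p) :=
  ⟨by norm_num, LipschitzWith.of_dist_le_mul fun V W => by
    simpa [Subtype.dist_eq, nagumoMapRestrict] using dist_nagumoMap_le hm p.2.1 p.2.2
      (mem_closedBall_zero_iff.1 V.2.1) (mem_closedBall_zero_iff.1 W.2.1)⟩

lemma nonempty_smallDecaying (hm : 0 < m) : Nonempty (smallDecaying m) :=
  ⟨⟨0, zero_mem_smallDecaying hm.le⟩⟩

noncomputable def perturbation (hm : 0 < m) (p : admissible m) : smallDecaying m :=
  haveI := nonempty_smallDecaying hm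
  (contractingWith_nagumoMapRestrict hm p).fixedPoint _

noncomputable def projAdmissible (hm : m ≤ 1 - m) (q : ℝ × ℝ) : admissible m :=
  ⟨(projIcc 0 (m ^ 2 / 128) (by positivity) q.1, projIcc m (1 - m) hm q.2),
    Subtype.mem _, Subtype.mem _⟩

lemma continuous_projAdmissible (hm : m ≤ 1 - m) : Continuous (projAdmissible hm) :=
  ((continuous_subtype_val.comp (continuous_projIcc.comp continuous_fst)).prodMk
    (continuous_subtype_val.comp (continuous_projIcc.comp continuous_snd))).subtype_mk _

lemma projAdmissible_of_mem (hm : m ≤ 1 - m) {q : ℝ × ℝ} (hq : q ∈ admissible m) :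
    projAdmissible hm q = ⟨q, hq⟩ := by
  ext <;> simp [projAdmissible, projIcc_of_mem, hq.1, hq.2]

variable (hm : 0 < m) (p : admissible m)

lemma nagumoMap_perturbation :
    nagumoMap p.1.1 p.1.2 (perturbation hm p) = perturbation hm p :=
  have := nonempty_smallDecaying hm
  congrArg Subtype.val (contractingWith_nagumoMapRestrict hm p).fixedPoint_isFixedPt

lemma norm_perturbation_le : ‖(perturbation hm p : ℤ →ᵇ ℝ)‖ ≤ 8 / m * p.1.1 := by
  have := nonempty_smallDecaying hm
  have h := (contractingWith_nagumoMapRestrict hm p).dist_fixedPoint_le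
    ⟨0, zero_mem_smallDecaying hm.le⟩
  rw [Subtype.dist_eq, Subtype.dist_eq, dist_zero_left, dist_zero_left] at h
  simp only [nagumoMapRestrict, MapsTo.val_restrict_apply, NNReal.coe_inv, NNReal.coe_ofNat] at h
  calc _ ≤ _ := h
    _ ≤ m⁻¹ * (4 * p.1.1) / (1 - 2⁻¹) :=
      div_le_div_of_nonneg_right (norm_nagumoMap_zero_le hm p.2.2 p.2.1.1) (by norm_num)
    _ = 8 / m * p.1.1 := by ring

lemma continuous_perturbation : Continuous (perturbation hm) := by
  have := nonempty_smallDecaying hm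
  refine ContractingWith.continuous_fixedPoint _ fun V => Continuous.subtype_mk ?_ _
  have hμ (q : admissible m) : q.1.2 ≠ 0 := (hm.trans_le q.2.2.1).ne'
  have hμ' (q : admissible m) : 1 - q.1.2 ≠ 0 := by linarith [q.2.2.2]
  unfold nagumoMap
  fun_prop (disch := assumption)

end Contraction

end DiscreteNagumo

open DiscreteNagumo

/-- For every compact interval `[a,b] ⊂ (0,1)` there are
`d⋆ > 0`, `C > 0` and a continuous map `Φ : (0,d⋆) × [a,b] → ℓ^∞(ℤ,ℝ)` such that
for all `d ∈ (0,d⋆)` and `μ ∈ [a,b]`, `U = Φ(d,μ)` is a bounded solution of the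
discrete Nagumo steady-state equation with `sup_n |U_n − Ū_n| ≤ C·d`,
`U_n → 0` as `n → −∞`, `U_n → 1` as `n → +∞`, and moreover
`sup_{μ∈[a,b]} ‖Φ(d,μ) − Ū‖_∞ → 0` as `d → 0⁺`. -/
theorem statement9 (a b : ℝ) (ha : 0 < a) (hab : a ≤ b) (hb : b < 1) :
    ∃ dstar > (0 : ℝ), ∃ C > (0 : ℝ), ∃ Φ : ℝ → ℝ → (ℤ →ᵇ ℝ),
      ContinuousOn (fun q : ℝ × ℝ => Φ q.1 q.2) (Set.Ioo 0 dstar ×ˢ Set.Icc a b) ∧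
      (∀ d ∈ Set.Ioo (0 : ℝ) dstar, ∀ μ ∈ Set.Icc a b,
        (∀ n : ℤ, 0 = d * (Φ d μ (n + 1) + Φ d μ (n - 1) - 2 * Φ d μ n)
            + Φ d μ n * (Φ d μ n - μ) * (1 - Φ d μ n)) ∧
        (∀ n : ℤ, |Φ d μ n - UbarFun n| ≤ C * d) ∧
        Tendsto (fun n : ℤ => Φ d μ n) atBot (nhds 0) ∧
        Tendsto (fun n : ℤ => Φ d μ n) atTop (nhds 1)) ∧
      (∀ ε > (0 : ℝ), ∃ d₀ > (0 : ℝ), ∀ d : ℝ, 0 < d → d < d₀ → d < dstar →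
        ∀ μ ∈ Set.Icc a b, ∀ n : ℤ, |Φ d μ n - UbarFun n| ≤ ε) := by
  set m := min a (1 - b)
  have hm : 0 < m := lt_min ha (by linarith)
  have hμ : Icc a b ⊆ Icc m (1 - m) :=
    Icc_subset_Icc (min_le_left _ _) (by linarith [min_le_right a (1 - b)])
  have hm' : m ≤ 1 - m := nonempty_Icc.1 ((nonempty_Icc.2 hab).mono hμ)
  have hp {d μ} (hd : d ∈ Ioo 0 (m ^ 2 / 128)) (hμab : μ ∈ Icc a b) : (d, μ) ∈ admissible m :=
    ⟨Ioo_subset_Icc_self hd, hμ hμab⟩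
  refine ⟨m ^ 2 / 128, by positivity, 8 / m, by positivity,
    fun d μ => ubar + perturbation hm (projAdmissible hm' (d, μ)), ?_,
    fun d hd μ hμab => ?_, fun ε hε => ⟨m * ε / 8, by positivity, fun d hd₀ hdε hdδ μ hμab n => ?_⟩⟩
  · exact (continuous_const.add (continuous_subtype_val.comp
      ((continuous_perturbation hm).comp (continuous_projAdmissible hm')))).continuousOn
  · simp only [projAdmissible_of_mem hm' (hp hd hμab)]
    have hV := (perturbation hm ⟨_, hp hd hμab⟩).2.2
    exact ⟨nagumo_eq_of_nagumoMap_eq (ha.trans_le hμab.1).ne' (hμab.2.trans_lt hb).ne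
        (nagumoMap_perturbation hm ⟨_, hp hd hμab⟩),
      fun n => (abs_ubar_add_apply_sub_le _ n).trans (norm_perturbation_le hm _),
      tendsto_ubar_add_atBot hV, tendsto_ubar_add_atTop hV⟩
  · simp only [projAdmissible_of_mem hm' (hp ⟨hd₀, hdδ⟩ hμab)]
    calc _ ≤ 8 / m * d := (abs_ubar_add_apply_sub_le _ n).trans (norm_perturbation_le hm _)
      _ ≤ 8 / m * (m * ε / 8) := by gcongr
      _ = ε := by field_simp
end

section
/- For every compact interval [a,b] ⊂ (0,1) there exist d⋆ > 0 and C > 0 such that for every d ∈ (0, d⋆) and every μ ∈ [a,b] there exists a bounded sequence U : ℤ → ℝ satisfying the discrete Nagumo steady-state equation 0 = d(U_{n+1} + U_{n−1} − 2U_n) + U_n(U_n − μ)(1 − U_n) for all n ∈ ℤ, such that sup_{n∈ℤ} |U_n − V̄(μ)_n| ≤ C·d, U_n → 0 as n → −∞, and U_n → 1 as n → +∞. -/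
open Filter Topology BoundedContinuousFunction
open scoped NNReal

theorem exists_fixedPoint_abs_le_of_contracting {ι : Type*} [TopologicalSpace ι]
    [DiscreteTopology ι] (F : (ι → ℝ) → ι → ℝ) {E : ι → ℝ} {B : ℝ} (hE0 : ∀ i, 0 ≤ E i)
    (hEB : ∀ i, E i ≤ B) {K : ℝ≥0} (hK : K < 1)
    (hmaps : ∀ w, (∀ i, |w i| ≤ E i) → ∀ i, |F w i| ≤ E i)
    (hlip : ∀ w v, (∀ i, |w i| ≤ E i) → (∀ i, |v i| ≤ E i) →
      ∀ D, 0 ≤ D → (∀ i, |w i - v i| ≤ D) → ∀ i, |F w i - F v i| ≤ K * D) :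
    ∃ w, (∀ i, |w i| ≤ E i) ∧ F w = w := by
  let S : Set (ι →ᵇ ℝ) := {f | ∀ i, |f i| ≤ E i}
  have hS : IsClosed S := by
    simp only [S, Set.ofPred_forall]
    exact isClosed_iInter fun i => isClosed_le (continuous_eval_const i).abs continuous_const
  have : CompleteSpace S := hS.completeSpace_coe
  have : Nonempty S := ⟨⟨0, fun i => by simpa using hE0 i⟩⟩
  let T : S → S := fun f => ⟨ofNormedAddCommGroupDiscrete (F f) B
      fun i => (hmaps f f.2 i).trans (hEB i), hmaps f f.2⟩
  have hT : ContractingWith K T := by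
    refine ⟨hK, LipschitzWith.of_dist_le_mul fun f g => ?_⟩
    refine (dist_le (by positivity)).mpr fun i => ?_
    exact hlip f g f.2 g.2 _ dist_nonneg
      (fun j => (Real.dist_eq _ _).symm.trans_le (dist_coe_le_dist j)) i
  exact ⟨_, (hT.fixedPoint T).2, congrArg (fun g : S => ⇑(g : ι →ᵇ ℝ)) hT.fixedPoint_isFixedPt⟩

def discreteLaplacian (u : ℤ → ℝ) (n : ℤ) : ℝ := u (n + 1) + u (n - 1) - 2 * u n

lemma discreteLaplacian_add_sub_add (u v w : ℤ → ℝ) (n : ℤ) :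
    discreteLaplacian (u + v) n - discreteLaplacian (u + w) n = discreteLaplacian (v - w) n := by
  simp only [discreteLaplacian, Pi.add_apply, Pi.sub_apply]
  ring

lemma abs_discreteLaplacian_le {u E : ℤ → ℝ} {n : ℤ} (hu : ∀ k, |u k| ≤ E k)
    (hsucc : E (n + 1) ≤ 2 * E n) (hpred : E (n - 1) ≤ 2 * E n) :
    |discreteLaplacian u n| ≤ 6 * E n := by
  have h₁ := abs_le.mp (hu (n + 1))
  have h₂ := abs_le.mp (hu (n - 1))
  have h₃ := abs_le.mp (hu n)
  rw [discreteLaplacian, abs_le]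
  constructor <;> linarith [h₁.1, h₁.2, h₂.1, h₂.2, h₃.1, h₃.2]

noncomputable def decayWeight (n : ℤ) : ℝ := 2⁻¹ ^ n.natAbs

lemma decayWeight_nonneg (n : ℤ) : 0 ≤ decayWeight n := by
  unfold decayWeight; positivity

lemma decayWeight_le_one (n : ℤ) : decayWeight n ≤ 1 :=
  pow_le_one₀ (by norm_num) (by norm_num)

lemma decayWeight_le_two_mul {k n : ℤ} (h : n.natAbs ≤ k.natAbs + 1) :
    decayWeight k ≤ 2 * decayWeight n := calc
  decayWeight k = 2 * 2⁻¹ ^ (k.natAbs + 1) := by rw [decayWeight, pow_succ]; ring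
  _ ≤ 2 * decayWeight n := by
    gcongr
    exact pow_le_pow_of_le_one (by norm_num) (by norm_num) h

lemma decayWeight_add_one_le (n : ℤ) : decayWeight (n + 1) ≤ 2 * decayWeight n :=
  decayWeight_le_two_mul (by omega)

lemma decayWeight_sub_one_le (n : ℤ) : decayWeight (n - 1) ≤ 2 * decayWeight n :=
  decayWeight_le_two_mul (by omega)

lemma tendsto_decayWeight_cofinite : Tendsto decayWeight cofinite (𝓝 0) := by
  have hnatAbs : Tendsto Int.natAbs cofinite atTop := by
    rw [← Nat.cofinite_eq_atTop]
    refine Tendsto.cofinite_of_finite_preimage_singleton fun k => ?_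
    exact (Set.finite_Icc (-(k : ℤ)) k).subset fun n hn => by
      simp only [Set.mem_preimage, Set.mem_singleton_iff] at hn
      simp only [Set.mem_Icc]
      omega
  exact (tendsto_pow_atTop_nhds_zero_of_lt_one (by norm_num) (by norm_num)).comp hnatAbs

def nagumoDeriv (μ x : ℝ) : ℝ := -3 * x ^ 2 + 2 * (1 + μ) * x - μ

def nagumoRemainder (β h : ℝ) : ℝ := h ^ 2 * (β - h)

lemma nagumo_add (μ r h : ℝ) :
    (r + h) * (r + h - μ) * (1 - (r + h)) = r * (r - μ) * (1 - r) + nagumoDeriv μ r * h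
      + nagumoRemainder (1 + μ - 3 * r) h := by
  unfold nagumoDeriv nagumoRemainder
  ring

lemma abs_nagumoRemainder_sub_le {β ρ x y : ℝ} (hβ : |β| ≤ 2) (hρ : ρ ≤ 1)
    (hx : |x| ≤ ρ) (hy : |y| ≤ ρ) :
    |nagumoRemainder β x - nagumoRemainder β y| ≤ 7 * ρ * |x - y| := by
  have hρ0 : 0 ≤ ρ := (abs_nonneg x).trans hx
  have hfactor : |β * (x + y) - (x ^ 2 + x * y + y ^ 2)| ≤ 7 * ρ := calc
    _ ≤ |β| * (|x| + |y|) + (|x| ^ 2 + |x| * |y| + |y| ^ 2) := by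
      refine (abs_sub _ _).trans (add_le_add ?_ ?_)
      · rw [abs_mul]; gcongr; exact abs_add_le x y
      · refine (abs_add_le _ _).trans ?_
        rw [abs_pow]
        gcongr
        refine (abs_add_le _ _).trans_eq ?_
        rw [abs_pow, abs_mul]
    _ ≤ 2 * (ρ + ρ) + (ρ ^ 2 + ρ * ρ + ρ ^ 2) := by gcongr
    _ ≤ 7 * ρ := by nlinarith
  calc |nagumoRemainder β x - nagumoRemainder β y|
      = |x - y| * |β * (x + y) - (x ^ 2 + x * y + y ^ 2)| := by
        rw [← abs_mul, nagumoRemainder, nagumoRemainder]; ring_nf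
    _ ≤ |x - y| * (7 * ρ) := by gcongr
    _ = 7 * ρ * |x - y| := mul_comm _ _

section VbarFun

variable {μ : ℝ}

lemma vbarFun_trichotomy (μ : ℝ) (n : ℤ) :
    VbarFun μ n = 0 ∨ VbarFun μ n = μ ∨ VbarFun μ n = 1 := by
  unfold VbarFun; split_ifs <;> simp

lemma vbarFun_isRoot (μ : ℝ) (n : ℤ) :
    VbarFun μ n * (VbarFun μ n - μ) * (1 - VbarFun μ n) = 0 := by
  rcases vbarFun_trichotomy μ n with h | h | h <;> rw [h] <;> ring

lemma abs_vbarFun_le_one (h0 : 0 ≤ μ) (h1 : μ ≤ 1) (n : ℤ) : |VbarFun μ n| ≤ 1 := by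
  rcases vbarFun_trichotomy μ n with h | h | h <;> rw [h, abs_le] <;> constructor <;> linarith

lemma abs_vbarFun_coeff_le (h0 : 0 ≤ μ) (h1 : μ ≤ 1) (n : ℤ) :
    |1 + μ - 3 * VbarFun μ n| ≤ 2 := by
  rcases vbarFun_trichotomy μ n with h | h | h <;> rw [h, abs_le] <;> constructor <;> linarith

lemma le_abs_nagumoDeriv_vbarFun {m : ℝ} (hm : 0 < m) (hmμ : m ≤ μ * (1 - μ)) (n : ℤ) :
    m ≤ |nagumoDeriv μ (VbarFun μ n)| := by
  have h0 : 0 < μ := by nlinarith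
  have h1 : μ < 1 := by nlinarith
  rcases vbarFun_trichotomy μ n with h | h | h <;> rw [h, nagumoDeriv, le_abs] <;>
    [right; left; right] <;> nlinarith

lemma abs_discreteLaplacian_vbarFun_le (h0 : 0 ≤ μ) (h1 : μ ≤ 1) (n : ℤ) :
    |discreteLaplacian (VbarFun μ) n| ≤ 2 * decayWeight n := by
  obtain h | rfl | rfl | rfl | h : n ≤ -2 ∨ n = -1 ∨ n = 0 ∨ n = 1 ∨ 2 ≤ n := by omega
  · simp [discreteLaplacian, VbarFun, show n + 1 < 0 by omega, show n < 1 by omega,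
      show n < 0 by omega, decayWeight_nonneg]
  iterate 3 norm_num [discreteLaplacian, VbarFun, decayWeight, abs_le]; constructor <;> linarith
  · norm_num [discreteLaplacian, VbarFun, show ¬ n < 1 by omega, show n - 1 ≠ 0 by omega,
      show n ≠ 0 by omega, show ¬ n < 0 by omega, show ¬ n + 1 < 0 by omega,
      show n + 1 ≠ 0 by omega, decayWeight_nonneg]

end VbarFun

section Correction

variable {μ d m : ℝ}

-- `V̄ + w` solves the equation iff `w` is a fixed point: the equation, expanded at `V̄` by
-- `nagumo_add`, solved for the linear term.
noncomputable def nagumoCorrection (μ d : ℝ) (w : ℤ → ℝ) (n : ℤ) : ℝ :=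
  -(nagumoRemainder (1 + μ - 3 * VbarFun μ n) (w n) + d * discreteLaplacian (VbarFun μ + w) n)
    / nagumoDeriv μ (VbarFun μ n)

lemma nagumo_eq_of_nagumoCorrection_eq {w : ℤ → ℝ} {n : ℤ}
    (hκ : nagumoDeriv μ (VbarFun μ n) ≠ 0) (hw : nagumoCorrection μ d w n = w n) :
    0 = d * discreteLaplacian (VbarFun μ + w) n
      + (VbarFun μ + w) n * ((VbarFun μ + w) n - μ) * (1 - (VbarFun μ + w) n) := by
  rw [nagumoCorrection, div_eq_iff hκ] at hw
  rw [Pi.add_apply, nagumo_add, vbarFun_isRoot]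
  linear_combination hw

lemma abs_nagumoCorrection_sub_le (hm : 0 < m) (hmμ : m ≤ μ * (1 - μ)) (hd : 0 ≤ d)
    (hdm : d ≤ m ^ 2 / 100) {w v E : ℤ → ℝ} {n : ℤ} (hw : |w n| ≤ 4 * d / m)
    (hv : |v n| ≤ 4 * d / m) (hwv : ∀ k, |w k - v k| ≤ E k) (hsucc : E (n + 1) ≤ 2 * E n)
    (hpred : E (n - 1) ≤ 2 * E n) :
    |nagumoCorrection μ d w n - nagumoCorrection μ d v n| ≤ E n / 2 := by
  have hμ0 : 0 ≤ μ := by nlinarith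
  have hμ1 : μ ≤ 1 := by nlinarith
  have hm4 : m ≤ 1 / 4 := by nlinarith [sq_nonneg (2 * μ - 1)]
  have hρ : 4 * d / m ≤ m / 25 := by rw [div_le_iff₀ hm]; nlinarith
  have hE : 0 ≤ E n := (abs_nonneg _).trans (hwv n)
  have hN := abs_nagumoRemainder_sub_le (abs_vbarFun_coeff_le hμ0 hμ1 n) (by linarith) hw hv
  have hL : |discreteLaplacian (w - v) n| ≤ 6 * E n := abs_discreteLaplacian_le hwv hsucc hpred
  have hnum : |nagumoRemainder (1 + μ - 3 * VbarFun μ n) (w n)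
      - nagumoRemainder (1 + μ - 3 * VbarFun μ n) (v n) + d * discreteLaplacian (w - v) n|
      ≤ E n / 2 * m := calc
    _ ≤ 7 * (4 * d / m) * E n + d * (6 * E n) := by
      refine (abs_add_le _ _).trans (add_le_add (hN.trans ?_) ?_)
      · gcongr; exact hwv n
      · rw [abs_mul, abs_of_nonneg hd]; gcongr
    _ ≤ E n / 2 * m := by
      have hcoef : 7 * (4 * d / m) + 6 * d ≤ m / 2 := by nlinarith
      nlinarith [mul_le_mul_of_nonneg_right hcoef hE]
  have hκ := le_abs_nagumoDeriv_vbarFun hm hmμ n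
  have hdiff : nagumoCorrection μ d w n - nagumoCorrection μ d v n
      = -(nagumoRemainder (1 + μ - 3 * VbarFun μ n) (w n)
          - nagumoRemainder (1 + μ - 3 * VbarFun μ n) (v n) + d * discreteLaplacian (w - v) n)
        / nagumoDeriv μ (VbarFun μ n) := by
    rw [nagumoCorrection, nagumoCorrection, ← discreteLaplacian_add_sub_add]
    ring
  rw [hdiff, abs_div, abs_neg, div_le_iff₀ (hm.trans_le hκ)]
  exact hnum.trans (by gcongr)

lemma abs_nagumoCorrection_zero_le (hm : 0 < m) (hmμ : m ≤ μ * (1 - μ)) (hd : 0 ≤ d) (n : ℤ) :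
    |nagumoCorrection μ d 0 n| ≤ 2 * d / m * decayWeight n := by
  have hμ0 : 0 ≤ μ := by nlinarith
  have hμ1 : μ ≤ 1 := by nlinarith
  have hκ := le_abs_nagumoDeriv_vbarFun hm hmμ n
  have hzero : nagumoCorrection μ d 0 n
      = -(d * discreteLaplacian (VbarFun μ) n) / nagumoDeriv μ (VbarFun μ n) := by
    simp [nagumoCorrection, nagumoRemainder]
  rw [hzero, abs_div, abs_neg, abs_mul, abs_of_nonneg hd, div_le_iff₀ (hm.trans_le hκ)]
  calc d * |discreteLaplacian (VbarFun μ) n| ≤ d * (2 * decayWeight n) := by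
        gcongr; exact abs_discreteLaplacian_vbarFun_le hμ0 hμ1 n
    _ = 2 * d / m * decayWeight n * m := by field_simp
    _ ≤ 2 * d / m * decayWeight n * |nagumoDeriv μ (VbarFun μ n)| := by
        have := decayWeight_nonneg n
        gcongr

lemma abs_nagumoCorrection_le (hm : 0 < m) (hmμ : m ≤ μ * (1 - μ)) (hd : 0 ≤ d)
    (hdm : d ≤ m ^ 2 / 100) {w : ℤ → ℝ} (hw : ∀ k, |w k| ≤ 4 * d / m * decayWeight k) (n : ℤ) :
    |nagumoCorrection μ d w n| ≤ 4 * d / m * decayWeight n := by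
  have hρ : 0 ≤ 4 * d / m := by positivity
  have hwρ : |w n| ≤ 4 * d / m :=
    (hw n).trans (mul_le_of_le_one_right hρ (decayWeight_le_one n))
  have hsub := abs_nagumoCorrection_sub_le (v := 0) (E := fun k => 4 * d / m * decayWeight k)
    hm hmμ hd hdm hwρ (by simpa using hρ) (by simpa using hw)
    (by linarith [mul_le_mul_of_nonneg_left (decayWeight_add_one_le n) hρ])
    (by linarith [mul_le_mul_of_nonneg_left (decayWeight_sub_one_le n) hρ])
  calc |nagumoCorrection μ d w n|
      ≤ |nagumoCorrection μ d w n - nagumoCorrection μ d 0 n| + |nagumoCorrection μ d 0 n| := by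
        linarith [abs_sub_abs_le_abs_sub (nagumoCorrection μ d w n) (nagumoCorrection μ d 0 n)]
    _ ≤ 4 * d / m * decayWeight n / 2 + 2 * d / m * decayWeight n :=
        add_le_add hsub (abs_nagumoCorrection_zero_le hm hmμ hd n)
    _ = 4 * d / m * decayWeight n := by ring

end Correction

theorem exists_nagumo_solution_near_vbarFun {μ d m : ℝ} (hm : 0 < m) (hmμ : m ≤ μ * (1 - μ))
    (hd : 0 ≤ d) (hdm : d ≤ m ^ 2 / 100) :
    ∃ U : ℤ → ℝ, (∃ B : ℝ, ∀ n : ℤ, |U n| ≤ B) ∧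
      (∀ n : ℤ, 0 = d * (U (n + 1) + U (n - 1) - 2 * U n) + U n * (U n - μ) * (1 - U n)) ∧
      (∀ n : ℤ, |U n - VbarFun μ n| ≤ 4 / m * d) ∧
      Tendsto U atBot (𝓝 0) ∧ Tendsto U atTop (𝓝 1) := by
  have hρ : 0 ≤ 4 * d / m := by positivity
  have hρe (k : ℤ) : 4 * d / m * decayWeight k ≤ 4 * d / m :=
    mul_le_of_le_one_right hρ (decayWeight_le_one k)
  obtain ⟨w, hw, hfix⟩ := exists_fixedPoint_abs_le_of_contracting (nagumoCorrection μ d)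
    (fun k => mul_nonneg hρ (decayWeight_nonneg k)) hρe (K := 2⁻¹) (by norm_num)
    (fun w hw => abs_nagumoCorrection_le hm hmμ hd hdm hw)
    (fun w v hw hv D hD hwv n => by
      simpa [div_eq_inv_mul] using abs_nagumoCorrection_sub_le (E := fun _ => D)
        hm hmμ hd hdm ((hw n).trans (hρe n)) ((hv n).trans (hρe n)) hwv (by linarith)
        (by linarith))
  have hw0 : Tendsto w cofinite (𝓝 0) := squeeze_zero_norm hw (by
    simpa using tendsto_decayWeight_cofinite.const_mul (4 * d / m))
  rw [Int.cofinite_eq, tendsto_sup] at hw0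
  refine ⟨VbarFun μ + w, ⟨1 + 4 * d / m, fun n => ?_⟩, fun n => ?_, fun n => ?_, ?_, ?_⟩
  · exact (abs_add_le _ _).trans (add_le_add (abs_vbarFun_le_one (by nlinarith) (by nlinarith) n)
      ((hw n).trans (hρe n)))
  · exact nagumo_eq_of_nagumoCorrection_eq
      (abs_pos.mp (hm.trans_le (le_abs_nagumoDeriv_vbarFun hm hmμ n))) (congrFun hfix n)
  · simpa [mul_div_right_comm] using (hw n).trans (hρe n)
  · have hV : VbarFun μ =ᶠ[atBot] fun _ => 0 :=
      eventually_atBot.mpr ⟨-1, fun n hn => if_pos (by omega)⟩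
    rw [← add_zero (0 : ℝ)]
    exact (tendsto_const_nhds.congr' hV.symm).add hw0.1
  · have hV : VbarFun μ =ᶠ[atTop] fun _ => 1 := eventually_atTop.mpr ⟨1, fun n hn => by
      simp [VbarFun, show ¬ n < 0 by omega, show n ≠ 0 by omega]⟩
    rw [← add_zero (1 : ℝ)]
    exact (tendsto_const_nhds.congr' hV.symm).add hw0.2

theorem statement10_general (a b : ℝ) (ha : 0 < a) (hb : b < 1) :
    ∃ dstar > (0 : ℝ), ∃ C > (0 : ℝ),
      ∀ d ∈ Set.Ioo (0 : ℝ) dstar, ∀ μ ∈ Set.Icc a b,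
        ∃ U : ℤ → ℝ, (∃ B : ℝ, ∀ n : ℤ, |U n| ≤ B) ∧
          (∀ n : ℤ, 0 = d * (U (n + 1) + U (n - 1) - 2 * U n)
              + U n * (U n - μ) * (1 - U n)) ∧
          (∀ n : ℤ, |U n - VbarFun μ n| ≤ C * d) ∧
          Filter.Tendsto U Filter.atBot (nhds 0) ∧
          Filter.Tendsto U Filter.atTop (nhds 1) := by
  have hm : 0 < a * (1 - b) := mul_pos ha (by linarith)
  refine ⟨(a * (1 - b)) ^ 2 / 100, by positivity, 4 / (a * (1 - b)), by positivity,
    fun d hd μ hμ => ?_⟩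
  have hmμ : a * (1 - b) ≤ μ * (1 - μ) := by nlinarith [hμ.1, hμ.2]
  exact exists_nagumo_solution_near_vbarFun hm hmμ hd.1.le hd.2.le

/-- For every compact interval `[a,b] ⊂ (0,1)` there are
`d⋆ > 0` and `C > 0` such that for every `d ∈ (0,d⋆)` and `μ ∈ [a,b]` there is a
bounded solution `U` of the discrete Nagumo steady-state equation with
`sup_n |U_n − V̄(μ)_n| ≤ C·d`, `U_n → 0` as `n → −∞` and `U_n → 1` as `n → +∞`. -/
theorem statement10 (a b : ℝ) (ha : 0 < a) (hab : a ≤ b) (hb : b < 1) :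
    ∃ dstar > (0 : ℝ), ∃ C > (0 : ℝ),
      ∀ d ∈ Set.Ioo (0 : ℝ) dstar, ∀ μ ∈ Set.Icc a b,
        ∃ U : ℤ → ℝ, (∃ B : ℝ, ∀ n : ℤ, |U n| ≤ B) ∧
          (∀ n : ℤ, 0 = d * (U (n + 1) + U (n - 1) - 2 * U n)
              + U n * (U n - μ) * (1 - U n)) ∧
          (∀ n : ℤ, |U n - VbarFun μ n| ≤ C * d) ∧
          Filter.Tendsto U Filter.atBot (nhds 0) ∧
          Filter.Tendsto U Filter.atTop (nhds 1) :=
  statement10_general a b ha hb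
end
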